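/- arXiv:1011.6302 — 2 statements merged into one kernel-verified Lean document; each statement's English description precedes it below -/
import Mathlib

section
/- Let ψ : {0,1}ⁿ → ℝ be a pseudo-Boolean function. For every x ∈ ℝⁿ, L_ψ(x) = ψ(0) + Σ_{∅≠A⊆[n]} a_{ψ^d}(A)·max_{i∈A} x_i, where ψ^d is the dual of ψ and a_{ψ^d} its Möbius transform. -/
open Finset

/-- The indicator tuple `1_A` of a subset `A ⊆ [n]`. -/
def ind {n : ℕ} (A : Finset (Fin n)) : Fin n → ℝ := fun i => if i ∈ A then 1 else 0

/-- The Möbius transform of a pseudo-Boolean function (viewed as a set function). -/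
def mobius {n : ℕ} (ψ : Finset (Fin n) → ℝ) (A : Finset (Fin n)) : ℝ :=
  ∑ B ∈ A.powerset, (-1 : ℝ) ^ (A.card - B.card) * ψ B

/-- `min_{i ∈ A} x i` (with value `0` for `A = ∅`). -/
def minOnF {n : ℕ} (A : Finset (Fin n)) (x : Fin n → ℝ) : ℝ :=
  if h : A.Nonempty then A.inf' h x else 0

/-- The Lovász extension of a pseudo-Boolean function `ψ` (viewed as a set function):
`L_ψ(x) = a_ψ(∅) + Σ_{∅ ≠ A ⊆ [n]} a_ψ(A) · min_{i ∈ A} x_i`. -/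
def Lov {n : ℕ} (ψ : Finset (Fin n) → ℝ) (x : Fin n → ℝ) : ℝ :=
  mobius ψ ∅ + ∑ A : Finset (Fin n), mobius ψ A * minOnF A x

/-- `x ∈ ℝⁿ_σ`, i.e. `x_{σ(1)} ≤ ⋯ ≤ x_{σ(n)}`. -/
def inRσ {n : ℕ} (σ : Equiv.Perm (Fin n)) (x : Fin n → ℝ) : Prop :=
  ∀ i j : Fin n, i ≤ j → x (σ i) ≤ x (σ j)

/-- `A_σ^↑(k) = {σ(j) : j ≥ k}` (0-indexed; `Aup σ n = ∅`). -/
def Aup {n : ℕ} (σ : Equiv.Perm (Fin n)) (k : ℕ) : Finset (Fin n) :=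
  (Finset.univ.filter fun j : Fin n => k ≤ (j : ℕ)).image σ

/-- `A_σ^↓(k) = {σ(j) : j < k}` (0-indexed; `Adown σ 0 = ∅`). -/
def Adown {n : ℕ} (σ : Equiv.Perm (Fin n)) (k : ℕ) : Finset (Fin n) :=
  (Finset.univ.filter fun j : Fin n => (j : ℕ) < k).image σ

/-- The dual `ψ^d` of a pseudo-Boolean function `ψ` (as a set function):
`ψ^d(1_A) = ψ(0) + ψ(1) − ψ(1 − 1_A)`. -/
def dualPB {n : ℕ} (ψ : Finset (Fin n) → ℝ) : Finset (Fin n) → ℝ :=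
  fun A => ψ ∅ + ψ Finset.univ - ψ Aᶜ

/-- `max_{i ∈ A} x i` (with value `0` for `A = ∅`). -/
def maxOnF {n : ℕ} (A : Finset (Fin n)) (x : Fin n → ℝ) : ℝ :=
  if h : A.Nonempty then A.sup' h x else 0

/-! Expanding every `min_{i ∈ A} x_i` by the min–max inclusion–exclusion formula
`min_A x = Σ_{∅ ≠ B ⊆ A} (-1)^(|B|+1) max_B x` and exchanging the sums turns `L_ψ(x) - ψ(0)` into
`Σ_B (-1)^(|B|+1) (Σ_{A ⊇ B} a_ψ(A)) max_B x`. Möbius inversion `ψ(S) = Σ_{A ⊆ S} a_ψ(A)` gives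
`Σ_{A ⊇ B} a_ψ(A) = Σ_{E ⊆ B} (-1)^|E| ψ(Eᶜ)`, and for `B ≠ ∅` this is `(-1)^(|B|+1) a_{ψ^d}(B)`,
since the constant part `ψ(0) + ψ(1)` of `ψ^d` has no Möbius mass off `∅`. -/

variable {n : ℕ}

lemma neg_one_pow_sub_of_le {R : Type*} [Monoid R] [HasDistribNeg R] {k m : ℕ} (h : k ≤ m) :
    (-1 : R) ^ (m - k) = (-1) ^ m * (-1) ^ k := by
  conv_rhs => rw [← Nat.sub_add_cancel h, pow_add, mul_assoc, ← pow_add, ← two_mul, pow_mul]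
  simp

lemma sum_powerset_neg_one_pow_card' {R : Type*} [Ring R] {α : Type*} [DecidableEq α]
    (s : Finset α) : ∑ t ∈ s.powerset, (-1 : R) ^ #t = if s = ∅ then 1 else 0 := by
  have := congrArg (Int.cast : ℤ → R) (sum_powerset_neg_one_pow_card (x := s))
  push_cast at this
  exact this

lemma sum_Icc_neg_one_pow_card_sub {R : Type*} [Ring R] {α : Type*} [DecidableEq α]
    {s t : Finset α} (h : s ⊆ t) :
    ∑ u ∈ Icc s t, (-1 : R) ^ (#u - #s) = if s = t then 1 else 0 := by
  have hdisj : ∀ u ∈ (t \ s).powerset, Disjoint s u := fun u hu =>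
    disjoint_sdiff.mono_right (mem_powerset.1 hu)
  have hinj : Set.InjOn (s ∪ ·) (t \ s).powerset := fun u hu v hv huv => by
    rw [← union_sdiff_cancel_left (hdisj u hu), ← union_sdiff_cancel_left (hdisj v hv)]
    exact congrArg (· \ s) huv
  rw [Icc_eq_image_powerset h, sum_image hinj,
    sum_congr rfl fun u hu => by rw [card_union_of_disjoint (hdisj u hu), Nat.add_sub_cancel_left],
    sum_powerset_neg_one_pow_card']
  exact if_congr (sdiff_eq_empty_iff_subset.trans ⟨h.antisymm, fun hst => hst ▸ subset_rfl⟩)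
    rfl rfl

lemma mobius_eq_neg_one_pow_mul_sum (ψ : Finset (Fin n) → ℝ) (A : Finset (Fin n)) :
    mobius ψ A = (-1) ^ #A * ∑ B ∈ A.powerset, (-1) ^ #B * ψ B := by
  rw [mobius, mul_sum]
  refine sum_congr rfl fun B hB => ?_
  rw [neg_one_pow_sub_of_le (card_le_card (mem_powerset.1 hB)), mul_assoc]

lemma sum_powerset_mobius (ψ : Finset (Fin n) → ℝ) (S : Finset (Fin n)) :
    ∑ A ∈ S.powerset, mobius ψ A = ψ S := by
  simp_rw [mobius]
  rw [sum_comm' (t' := S.powerset) (s' := fun B => Icc B S)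
    fun A B => by simp only [mem_powerset, mem_Icc]; grind]
  simp_rw [← sum_mul]
  rw [sum_congr rfl fun B hB => by rw [sum_Icc_neg_one_pow_card_sub (mem_powerset.1 hB)]]
  simp

lemma sum_superset_mobius (ψ : Finset (Fin n) → ℝ) (B : Finset (Fin n)) :
    ∑ A with B ⊆ A, mobius ψ A = ∑ E ∈ B.powerset, (-1) ^ #E * ψ Eᶜ := by
  symm
  calc ∑ E ∈ B.powerset, (-1) ^ #E * ψ Eᶜ
      = ∑ E ∈ B.powerset, ∑ A ∈ Eᶜ.powerset, (-1) ^ #E * mobius ψ A := by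
        simp_rw [← mul_sum, sum_powerset_mobius]
    _ = ∑ A, ∑ E ∈ (B \ A).powerset, (-1) ^ #E * mobius ψ A :=
        sum_comm' fun E A => by
          simp only [mem_powerset, mem_univ, and_true, subset_sdiff, subset_compl_comm,
            subset_compl_iff_disjoint_right]
    _ = ∑ A with B ⊆ A, mobius ψ A := by
        simp_rw [← sum_mul, sum_powerset_neg_one_pow_card', sdiff_eq_empty_iff_subset, ite_mul,
          one_mul, zero_mul, sum_ite]
        simp

lemma mobius_dualPB_eq_sum_superset (ψ : Finset (Fin n) → ℝ) {B : Finset (Fin n)}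
    (hB : B.Nonempty) :
    mobius (dualPB ψ) B = (-1) ^ (#B + 1) * ∑ A with B ⊆ A, mobius ψ A := by
  rw [mobius_eq_neg_one_pow_mul_sum, sum_superset_mobius]
  simp only [dualPB, mul_sub, sum_sub_distrib, ← sum_mul, sum_powerset_neg_one_pow_card',
    if_neg hB.ne_empty, zero_mul, zero_sub, pow_succ]
  ring

lemma maxOnF_insert_of_le {A : Finset (Fin n)} (hA : A.Nonempty) {c : Fin n} {x : Fin n → ℝ}
    (hc : ∀ i ∈ A, x c ≤ x i) : maxOnF (insert c A) x = maxOnF A x := by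
  obtain ⟨b, hb⟩ := hA
  rw [maxOnF, maxOnF, dif_pos (insert_nonempty c A), dif_pos ⟨b, hb⟩, sup'_insert (H := ⟨b, hb⟩),
    sup_eq_right.2 ((hc b hb).trans (le_sup' x hb))]

lemma minOnF_eq_sum_maxOnF (C : Finset (Fin n)) (x : Fin n → ℝ) :
    minOnF C x = ∑ B ∈ C.powerset, (-1) ^ (#B + 1) * maxOnF B x := by
  rcases C.eq_empty_or_nonempty with rfl | hC
  · simp [minOnF, maxOnF]
  obtain ⟨c, hc, hmin⟩ := exists_mem_eq_inf' hC x
  have hxc : ∀ i ∈ C, x c ≤ x i := fun i hi => hmin ▸ inf'_le x hi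
  -- Pairing `B` with `insert c B` for a minimiser `c`, the terms cancel unless `B = ∅`.
  rw [minOnF, dif_pos hC, hmin, ← insert_erase hc, sum_powerset_insert (notMem_erase c C),
    ← sum_add_distrib, sum_eq_single ∅]
  · simp [maxOnF]
  · intro B hB hBne
    have hBC : B ⊆ C.erase c := mem_powerset.1 hB
    rw [card_insert_of_notMem fun h => notMem_erase c C (hBC h),
      maxOnF_insert_of_le (nonempty_iff_ne_empty.2 hBne)
        fun i hi => hxc i (mem_of_mem_erase (hBC hi)), pow_succ]
    ring
  · exact fun h => absurd (empty_mem_powerset _) h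

/-- `L_ψ(x) = ψ(0) + Σ_{∅≠A⊆[n]} a_{ψ^d}(A)·max_{i∈A} x_i`.
(The term for `A = ∅` vanishes since `maxOn ∅ x = 0`.) -/
theorem stmt1 {n : ℕ} (ψ : Finset (Fin n) → ℝ) (x : Fin n → ℝ) :
    Lov ψ x = ψ ∅ + ∑ A : Finset (Fin n), mobius (dualPB ψ) A * maxOnF A x := by
  rw [Lov, show mobius ψ ∅ = ψ ∅ by simp [mobius]]
  congr 1
  calc ∑ A, mobius ψ A * minOnF A x
      = ∑ A, ∑ B ∈ A.powerset, mobius ψ A * ((-1) ^ (#B + 1) * maxOnF B x) := by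
        simp_rw [minOnF_eq_sum_maxOnF, mul_sum]
    _ = ∑ B, ∑ A with B ⊆ A, mobius ψ A * ((-1) ^ (#B + 1) * maxOnF B x) :=
        sum_comm' fun A B => by simp
    _ = ∑ B, mobius (dualPB ψ) B * maxOnF B x := by
        refine sum_congr rfl fun B _ => ?_
        rcases B.eq_empty_or_nonempty with rfl | hB
        · simp [maxOnF]
        · rw [← sum_mul, mobius_dualPB_eq_sum_superset ψ hB]
          ring
end

section
/- Let I ⊆ ℝ₊ = [0,∞) be a real interval containing 0 and let f : Iⁿ → ℝ. Then the following are equivalent: (i) f is comonotonically modular; (ii) f is invariant under horizontal min-differences; (iii) there exists a function g : Iⁿ → ℝ such that for every permutation σ of [n] and every x ∈ Iⁿ ∩ ℝⁿ_σ, f(x) = g(0,…,0) + Σ_{i=1}^{n} (g(x_{σ(i)}·1_{A_σ^↑(i)}) − g(x_{σ(i)}·1_{A_σ^↑(i+1)})). Moreover, in (iii) one can choose g = f. -/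
open Finset

/-- `f` is comonotonically modular on `Iⁿ`:
`f(x) + f(x′) = f(x ∧ x′) + f(x ∨ x′)` for all comonotonic `x, x′ ∈ Iⁿ`. -/
def ComonModular {n : ℕ} (I : Set ℝ) (f : (Fin n → ℝ) → ℝ) : Prop :=
  ∀ σ : Equiv.Perm (Fin n), ∀ x y : Fin n → ℝ,
    (∀ i, x i ∈ I) → (∀ i, y i ∈ I) → inRσ σ x → inRσ σ y →
    f x + f y = f (fun i => min (x i) (y i)) + f (fun i => max (x i) (y i))

/-- `f` is invariant under horizontal min-differences on `Iⁿ` (`I ⊆ ℝ₊`):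
`f(x) − f(x ∧ c) = f([x]_c) − f([x]_c ∧ c)` for every `x ∈ Iⁿ` and `c ∈ I`. -/
def InvHMin {n : ℕ} (I : Set ℝ) (f : (Fin n → ℝ) → ℝ) : Prop :=
  ∀ x : Fin n → ℝ, (∀ i, x i ∈ I) → ∀ c ∈ I,
    f x - f (fun i => min (x i) c) =
      f (fun i => if x i ≤ c then 0 else x i) -
      f (fun i => min (if x i ≤ c then 0 else x i) c)

/-!
Write `F_σ(x) = f(0) + Σᵢ (f(x_{σ(i)}·1_{A_σ^↑(i)}) − f(x_{σ(i)}·1_{A_σ^↑(i+1)}))`. Its `i`-th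
summand depends on `x` only through the value `x_{σ(i)}`, so `F_σ` is modular under `min`/`max`
and satisfies the horizontal min-difference identity for every `σ`, and `F_σ` agrees with `f` on
the step vectors `c·1_{A_σ^↑(k)}` by telescoping. Conversely, if `x` is `σ`-sorted and `c` is its
least nonzero entry, then `x ∧ c` and `[x]_c ∧ c` are such step vectors while `[x]_c` has fewer
nonzero entries, so the min-difference identity lets `f = F_σ` propagate by induction.
-/

section Chain

variable {n : ℕ}

lemma mem_Aup (σ : Equiv.Perm (Fin n)) (k : ℕ) (i : Fin n) :
    i ∈ Aup σ k ↔ k ≤ (σ.symm i : ℕ) := by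
  simp only [Aup, mem_image, mem_filter, mem_univ, true_and]
  constructor
  · rintro ⟨j, hj, rfl⟩
    simpa using hj
  · exact fun h => ⟨σ.symm i, h, σ.apply_symm_apply i⟩

lemma ind_Aup_apply (σ : Equiv.Perm (Fin n)) (k : ℕ) (i : Fin n) :
    ind (Aup σ k) (σ i) = if k ≤ (i : ℕ) then 1 else 0 := by
  simp [ind, mem_Aup]

lemma Aup_eq_empty (σ : Equiv.Perm (Fin n)) {k : ℕ} (hk : n ≤ k) : Aup σ k = ∅ := by
  ext i
  simpa [mem_Aup] using (σ.symm i).isLt.trans_le hk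

lemma exists_filter_eq_Aup {σ : Equiv.Perm (Fin n)} {x : Fin n → ℝ} (hx : inRσ σ x)
    (p : ℝ → Prop) [DecidablePred p] (hp : ∀ a b, a ≤ b → p a → p b) :
    ∃ k, univ.filter (fun j => p (x j)) = Aup σ k := by
  refine ⟨#(univ.filter fun m : Fin n => ¬ p (x (σ m))), ?_⟩
  ext j
  obtain ⟨m, rfl⟩ := σ.surjective j
  simp only [mem_filter, mem_univ, true_and, mem_Aup, Equiv.symm_apply_apply]
  constructor
  · intro hm
    calc #(univ.filter fun m : Fin n => ¬ p (x (σ m))) ≤ #(Iio m) := by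
          refine card_le_card fun m' hm' => ?_
          simp only [mem_filter, mem_univ, true_and] at hm'
          exact mem_Iio.2 (lt_of_not_ge fun h => hm' (hp _ _ (hx m m' h) hm))
      _ = m := Fin.card_Iio m
  · intro hk
    by_contra hm
    have hsub : Iic m ⊆ univ.filter fun m : Fin n => ¬ p (x (σ m)) := fun m' hm' => by
      simp only [mem_filter, mem_univ, true_and]
      exact fun h => hm (hp _ _ (hx m' m (mem_Iic.1 hm')) h)
    have := card_le_card hsub
    rw [Fin.card_Iic] at this
    omega

/-- The paper's `[x]_c`. -/
noncomputable def truncBelow (x : Fin n → ℝ) (c : ℝ) : Fin n → ℝ :=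
  fun i => if x i ≤ c then 0 else x i

lemma inRσ_min {σ : Equiv.Perm (Fin n)} {x y : Fin n → ℝ} (hx : inRσ σ x) (hy : inRσ σ y) :
    inRσ σ fun i => min (x i) (y i) :=
  fun i j hij => min_le_min (hx i j hij) (hy i j hij)

lemma inRσ_max {σ : Equiv.Perm (Fin n)} {x y : Fin n → ℝ} (hx : inRσ σ x) (hy : inRσ σ y) :
    inRσ σ fun i => max (x i) (y i) :=
  fun i j hij => max_le_max (hx i j hij) (hy i j hij)

lemma inRσ_truncBelow {σ : Equiv.Perm (Fin n)} {x : Fin n → ℝ} (hx : inRσ σ x) {c : ℝ}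
    (hc : 0 ≤ c) : inRσ σ (truncBelow x c) := by
  intro i j hij
  have := hx i j hij
  simp only [truncBelow]
  split_ifs <;> linarith

lemma truncBelow_mem {I : Set ℝ} (h0 : (0 : ℝ) ∈ I) {x : Fin n → ℝ} (hx : ∀ i, x i ∈ I)
    (c : ℝ) (i : Fin n) : truncBelow x c i ∈ I := by
  unfold truncBelow
  split_ifs
  exacts [h0, hx i]

lemma min_const_eq_mul_ind {x : Fin n → ℝ} {c : ℝ} (hc : 0 ≤ c)
    (hx : ∀ i, x i = 0 ∨ c ≤ x i) :
    (fun i => min (x i) c) = fun i => c * ind (univ.filter fun i => c ≤ x i) i := by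
  funext i
  rcases hx i with h | h
  · rcases hc.eq_or_lt with rfl | hc'
    · simp [h]
    · simp [ind, h, hc, not_le.2 hc']
  · simp [ind, h]

lemma min_truncBelow_eq_mul_ind (x : Fin n → ℝ) {c : ℝ} (hc : 0 ≤ c) :
    (fun i => min (truncBelow x c i) c) = fun i => c * ind (univ.filter fun i => c < x i) i := by
  funext i
  by_cases h : x i ≤ c
  · simp [truncBelow, ind, h, hc]
  · simp [truncBelow, ind, h, (not_le.1 h).le, not_le.1 h]

variable (g : (Fin n → ℝ) → ℝ) (σ : Equiv.Perm (Fin n))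

def chainTerm (i : ℕ) (v : ℝ) : ℝ :=
  g (fun j => v * ind (Aup σ i) j) - g (fun j => v * ind (Aup σ (i + 1)) j)

/-- The right-hand side of the representation formula (iii). -/
def chainSum (x : Fin n → ℝ) : ℝ :=
  g (fun _ => 0) + ∑ i : Fin n, chainTerm g σ i (x (σ i))

@[simp]
lemma chainTerm_zero (i : ℕ) : chainTerm g σ i 0 = 0 := by
  simp [chainTerm]

lemma chainSum_min_add_chainSum_max (x y : Fin n → ℝ) :
    chainSum g σ (fun i => min (x i) (y i)) + chainSum g σ (fun i => max (x i) (y i)) =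
      chainSum g σ x + chainSum g σ y := by
  have key : ∀ i : Fin n,
      chainTerm g σ i (min (x (σ i)) (y (σ i))) + chainTerm g σ i (max (x (σ i)) (y (σ i))) =
        chainTerm g σ i (x (σ i)) + chainTerm g σ i (y (σ i)) := by
    intro i
    rcases le_total (x (σ i)) (y (σ i)) with h | h
    · rw [min_eq_left h, max_eq_right h]
    · rw [min_eq_right h, max_eq_left h, add_comm]
  have := sum_congr rfl fun i (_ : i ∈ univ) => key i
  rw [sum_add_distrib, sum_add_distrib] at this
  simp only [chainSum]
  linarith

lemma chainSum_add_chainSum_min_truncBelow (x : Fin n → ℝ) {c : ℝ} (hc : 0 ≤ c) :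
    chainSum g σ x + chainSum g σ (fun i => min (truncBelow x c i) c) =
      chainSum g σ (truncBelow x c) + chainSum g σ (fun i => min (x i) c) := by
  have key : ∀ i : Fin n,
      chainTerm g σ i (x (σ i)) + chainTerm g σ i (min (truncBelow x c (σ i)) c) =
        chainTerm g σ i (truncBelow x c (σ i)) + chainTerm g σ i (min (x (σ i)) c) := by
    intro i
    by_cases h : x (σ i) ≤ c
    · simp [truncBelow, h, hc]
    · simp [truncBelow, h, min_eq_right (not_le.1 h).le, add_comm]
  have := sum_congr rfl fun i (_ : i ∈ univ) => key i
  rw [sum_add_distrib, sum_add_distrib] at this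
  simp only [chainSum]
  linarith

lemma chainSum_mul_ind_Aup (c : ℝ) (k : ℕ) :
    chainSum g σ (fun j => c * ind (Aup σ k) j) = g (fun j => c * ind (Aup σ k) j) := by
  set G : ℕ → ℝ := fun m => g (fun j => c * ind (Aup σ m) j) with hG
  -- clamping the index at `k` makes the vanishing summands `i < k` part of the telescope
  have hterm : ∀ i : Fin n,
      chainTerm g σ i (c * ind (Aup σ k) (σ i)) = G (max i k) - G (max (i + 1) k) := by
    intro i
    rw [ind_Aup_apply]
    split_ifs with h
    · rw [mul_one, max_eq_left h, max_eq_left (by omega)]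
      rfl
    · rw [mul_zero, chainTerm_zero, max_eq_right (by omega), max_eq_right (by omega), sub_self]
  have hGn : G (max n k) = g (fun _ => 0) := by
    simp [hG, Aup_eq_empty σ (le_max_left n k), ind]
  simp only [chainSum, hterm]
  rw [Fin.sum_univ_eq_sum_range (fun i => G (max i k) - G (max (i + 1) k)), sum_range_sub', hGn]
  simp [hG]

lemma chainSum_mul_ind_filter {x : Fin n → ℝ} (hx : inRσ σ x) (c : ℝ) (p : ℝ → Prop)
    [DecidablePred p] (hp : ∀ a b, a ≤ b → p a → p b) :
    chainSum g σ (fun i => c * ind (univ.filter fun j => p (x j)) i) =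
      g (fun i => c * ind (univ.filter fun j => p (x j)) i) := by
  obtain ⟨k, hk⟩ := exists_filter_eq_Aup hx p hp
  rw [hk, chainSum_mul_ind_Aup]

end Chain

section Equivalences

variable {n : ℕ} {I : Set ℝ} {f : (Fin n → ℝ) → ℝ}

lemma invHMin_of_comonModular (h0 : (0 : ℝ) ∈ I) (hIpos : I ⊆ Set.Ici 0)
    (hf : ComonModular I f) : InvHMin I f := by
  intro x hxI c hcI
  have hc : 0 ≤ c := hIpos hcI
  have hx : inRσ (Tuple.sort x) x := fun i j hij => Tuple.monotone_sort x hij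
  have hmod := hf (Tuple.sort x) (fun i => min (x i) c) (truncBelow x c)
    (fun i => min_rec' (· ∈ I) (hxI i) hcI) (truncBelow_mem h0 hxI c)
    (inRσ_min hx fun _ _ _ => le_rfl) (inRσ_truncBelow hx hc)
  have hinf : (fun i => min (min (x i) c) (truncBelow x c i)) =
      fun i => min (truncBelow x c i) c := by
    funext i
    have hxi : 0 ≤ x i := hIpos (hxI i)
    by_cases h : x i ≤ c
    · simp [truncBelow, h, hc, hxi]
    · simp [truncBelow, h, (not_le.1 h).le]
  have hsup : (fun i => max (min (x i) c) (truncBelow x c i)) = x := by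
    funext i
    have hxi : 0 ≤ x i := hIpos (hxI i)
    by_cases h : x i ≤ c
    · simp [truncBelow, h, hxi]
    · simp [truncBelow, h, (not_le.1 h).le]
  rw [hinf, hsup] at hmod
  change _ = f (truncBelow x c) - f (fun i => min (truncBelow x c i) c)
  linarith

lemma eq_chainSum_of_invHMin (h0 : (0 : ℝ) ∈ I) (hIpos : I ⊆ Set.Ici 0) (hf : InvHMin I f)
    (σ : Equiv.Perm (Fin n)) (x : Fin n → ℝ) (hxI : ∀ i, x i ∈ I) (hx : inRσ σ x) :
    f x = chainSum f σ x := by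
  induction hN : #(univ.filter fun i => x i ≠ 0) using Nat.strong_induction_on generalizing x
    with | _ N ih =>
  obtain hzero | hne := (univ.filter fun i => x i ≠ 0).eq_empty_or_nonempty
  · obtain rfl : x = fun _ => 0 := funext fun i => by
      simpa using filter_eq_empty_iff.1 hzero (mem_univ i)
    simp [chainSum]
  obtain ⟨i₀, hi₀, hmin⟩ := exists_min_image _ x hne
  set c := x i₀
  have hc : 0 ≤ c := hIpos (hxI i₀)
  have hgap : ∀ i, x i = 0 ∨ c ≤ x i := fun i =>
    or_iff_not_imp_left.2 fun h => hmin i (by simp [h])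
  have hlow : f (fun i => min (x i) c) = chainSum f σ (fun i => min (x i) c) := by
    rw [min_const_eq_mul_ind hc hgap, chainSum_mul_ind_filter f σ hx c (c ≤ ·)
      fun _ _ hab h => h.trans hab]
  have hhigh : f (fun i => min (truncBelow x c i) c) =
      chainSum f σ (fun i => min (truncBelow x c i) c) := by
    rw [min_truncBelow_eq_mul_ind x hc, chainSum_mul_ind_filter f σ hx c (c < ·)
      fun _ _ hab h => h.trans_le hab]
  have hfewer : #(univ.filter fun i => truncBelow x c i ≠ 0) < N := by
    refine hN ▸ (card_le_card fun i hi => ?_).trans_lt (card_erase_lt_of_mem hi₀)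
    simp only [truncBelow, mem_filter, mem_univ, true_and, ne_eq, ite_eq_left_iff, not_le,
      not_forall, mem_erase] at hi ⊢
    obtain ⟨hci, hxi⟩ := hi
    exact ⟨fun h => (h ▸ hci).false, hxi⟩
  have htrunc := ih _ hfewer (truncBelow x c) (truncBelow_mem h0 hxI c)
    (inRσ_truncBelow hx hc) rfl
  have hdiff := hf x hxI c (hxI i₀)
  change _ = f (truncBelow x c) - f (fun i => min (truncBelow x c i) c) at hdiff
  have := chainSum_add_chainSum_min_truncBelow f σ x hc
  linarith

lemma comonModular_of_eq_chainSum {g : (Fin n → ℝ) → ℝ}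
    (hg : ∀ σ x, (∀ i, x i ∈ I) → inRσ σ x → f x = chainSum g σ x) : ComonModular I f := by
  intro σ x y hxI hyI hx hy
  rw [hg σ x hxI hx, hg σ y hyI hy,
    hg σ _ (fun i => min_rec' (· ∈ I) (hxI i) (hyI i)) (inRσ_min hx hy),
    hg σ _ (fun i => max_rec' (· ∈ I) (hxI i) (hyI i)) (inRσ_max hx hy)]
  exact (chainSum_min_add_chainSum_max g σ x y).symm

end Equivalences

theorem stmt9_general {n : ℕ} (I : Set ℝ) (h0 : (0 : ℝ) ∈ I)
    (hIpos : I ⊆ Set.Ici (0 : ℝ)) (f : (Fin n → ℝ) → ℝ) :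
    (ComonModular I f ↔ InvHMin I f) ∧
    (ComonModular I f ↔ ∃ g : (Fin n → ℝ) → ℝ,
      ∀ σ : Equiv.Perm (Fin n), ∀ x : Fin n → ℝ, (∀ i, x i ∈ I) → inRσ σ x →
        f x = g (fun _ => 0) + ∑ i : Fin n,
          (g (fun j => x (σ i) * ind (Aup σ (i : ℕ)) j) -
           g (fun j => x (σ i) * ind (Aup σ ((i : ℕ) + 1)) j))) ∧
    (ComonModular I f →
      ∀ σ : Equiv.Perm (Fin n), ∀ x : Fin n → ℝ, (∀ i, x i ∈ I) → inRσ σ x →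
        f x = f (fun _ => 0) + ∑ i : Fin n,
          (f (fun j => x (σ i) * ind (Aup σ (i : ℕ)) j) -
           f (fun j => x (σ i) * ind (Aup σ ((i : ℕ) + 1)) j))) := by
  have hchain := eq_chainSum_of_invHMin h0 hIpos (f := f)
  have hinv := invHMin_of_comonModular h0 hIpos (f := f)
  exact ⟨⟨hinv, fun h => comonModular_of_eq_chainSum (hchain h)⟩,
    ⟨fun h => ⟨f, hchain (hinv h)⟩, fun ⟨_, hg⟩ => comonModular_of_eq_chainSum hg⟩,
    fun h => hchain (hinv h)⟩

/-- For `I ⊆ ℝ₊` an interval containing `0` and `f : Iⁿ → ℝ`, TFAE: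
(i) `f` is comonotonically modular; (ii) `f` is invariant under horizontal
min-differences; (iii) there is `g : Iⁿ → ℝ` with
`f(x) = g(0) + Σᵢ (g(x_{σ(i)}·1_{A_σ^↑(i)}) − g(x_{σ(i)}·1_{A_σ^↑(i+1)}))` on each `Iⁿ_σ`;
moreover, in (iii) one can choose `g = f`. -/
theorem stmt9 {n : ℕ} (I : Set ℝ) (hI : I.OrdConnected) (h0 : (0 : ℝ) ∈ I)
    (hIpos : I ⊆ Set.Ici (0 : ℝ)) (f : (Fin n → ℝ) → ℝ) :
    (ComonModular I f ↔ InvHMin I f) ∧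
    (ComonModular I f ↔ ∃ g : (Fin n → ℝ) → ℝ,
      ∀ σ : Equiv.Perm (Fin n), ∀ x : Fin n → ℝ, (∀ i, x i ∈ I) → inRσ σ x →
        f x = g (fun _ => 0) + ∑ i : Fin n,
          (g (fun j => x (σ i) * ind (Aup σ (i : ℕ)) j) -
           g (fun j => x (σ i) * ind (Aup σ ((i : ℕ) + 1)) j))) ∧
    (ComonModular I f →
      ∀ σ : Equiv.Perm (Fin n), ∀ x : Fin n → ℝ, (∀ i, x i ∈ I) → inRσ σ x →
        f x = f (fun _ => 0) + ∑ i : Fin n,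
          (f (fun j => x (σ i) * ind (Aup σ (i : ℕ)) j) -
           f (fun j => x (σ i) * ind (Aup σ ((i : ℕ) + 1)) j))) :=
  stmt9_general I h0 hIpos f
end
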